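/- For every instance with two agents (in which every good is positively valued by at least one agent and every good an agent regards as divisible is positively valued by that agent), there exist a good g* and a partial allocation x in which every good other than g* is fully allocated (∑_i x_{i,g} = 1 for all g ≠ g*) such that x is both EFXM and non-wasteful. That is, an EFXM and non-wasteful allocation always exists for two agents if at most one good is (partially) discarded. -/
import Mathlib


open scoped BigOperators Classical

/-- An instance of fair division with subjective divisibility: `n` agents and `m` goods,
each good of total amount 1.  Each agent `i` assigns a nonnegative value `v i g` to each
good `g` and regards each good as either divisible or indivisible for her. -/
structure FairDivision (n m : ℕ) where
  /-- agent `i`'s value for good `g` -/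
  v : Fin n → Fin m → ℝ
  v_nonneg : ∀ i g, 0 ≤ v i g
  /-- `divisible i g` means agent `i` regards good `g` as divisible -/
  divisible : Fin n → Fin m → Prop

namespace FairDivision

variable {n m : ℕ}

/-- Agent `i`'s utility from receiving fraction `t ∈ [0,1]` of good `g`:
`t * v i g` if `g` is divisible for `i`; `v i g` if `g` is indivisible for `i` and `t = 1`;
and `0` if `g` is indivisible for `i` and `t < 1`. -/
noncomputable def frUtil (I : FairDivision n m) (i : Fin n) (g : Fin m) (t : ℝ) : ℝ :=
  if I.divisible i g then t * I.v i g else if t = 1 then I.v i g else 0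

/-- Agent `i`'s (additive) utility for a bundle `b`, given by the fraction `b g` of each good. -/
noncomputable def util (I : FairDivision n m) (i : Fin n) (b : Fin m → ℝ) : ℝ :=
  ∑ g, I.frUtil i g (b g)

/-- Agent `i`'s utility for the bundle `b` with good `g` omitted. -/
noncomputable def utilMinus (I : FairDivision n m) (i : Fin n) (b : Fin m → ℝ) (g : Fin m) : ℝ :=
  ∑ g' ∈ Finset.univ.erase g, I.frUtil i g' (b g')

/-- A complete allocation: fractions in `[0,1]` summing to `1` for every good. -/
def IsAllocation (I : FairDivision n m) (x : Fin n → Fin m → ℝ) : Prop :=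
  (∀ i g, 0 ≤ x i g ∧ x i g ≤ 1) ∧ ∀ g, ∑ i, x i g = 1

/-- A partial allocation: fractions in `[0,1]` summing to at most `1` for every good. -/
def IsPartialAllocation (I : FairDivision n m) (x : Fin n → Fin m → ℝ) : Prop :=
  (∀ i g, 0 ≤ x i g ∧ x i g ≤ 1) ∧ ∀ g, ∑ i, x i g ≤ 1

/-- The maximin share of agent `i`: the supremum, over all fractional `n`-partitions
`P` of the goods, of the minimum over the parts `P j` of agent `i`'s utility. -/
noncomputable def MMS (I : FairDivision n m) (i : Fin n) : ℝ :=
  sSup { r : ℝ | ∃ P : Fin n → Fin m → ℝ, I.IsAllocation P ∧ r = ⨅ j, I.util i (P j) }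

/-- Non-wastefulness: every positive fraction an agent receives yields her positive utility. -/
def NonWasteful (I : FairDivision n m) (x : Fin n → Fin m → ℝ) : Prop :=
  ∀ i g, 0 < x i g → 0 < I.frUtil i g (x i g)

/-- Envy-freeness. -/
def EF (I : FairDivision n m) (x : Fin n → Fin m → ℝ) : Prop :=
  ∀ i j, I.util i (x j) ≤ I.util i (x i)

/-- Envy-freeness for mixed goods: for all agents `i, j`, if every good `j` receives a
positive fraction of is indivisible for `i`, then `i` does not envy `j` after removing some
such good from `j`'s bundle; otherwise `i` does not envy `j`. -/
def EFM (I : FairDivision n m) (x : Fin n → Fin m → ℝ) : Prop :=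
  ∀ i j,
    ((∀ g, 0 < x j g → ¬ I.divisible i g) →
      ∃ g, 0 < x j g ∧ I.utilMinus i (x j) g ≤ I.util i (x i)) ∧
    ((¬ ∀ g, 0 < x j g → ¬ I.divisible i g) → I.util i (x j) ≤ I.util i (x i))

/-- EFXM: as EFM, but the envy must vanish after removing any positively valued such good. -/
def EFXM (I : FairDivision n m) (x : Fin n → Fin m → ℝ) : Prop :=
  ∀ i j,
    ((∀ g, 0 < x j g → ¬ I.divisible i g) →
      ∀ g, 0 < x j g → 0 < I.v i g → I.utilMinus i (x j) g ≤ I.util i (x i)) ∧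
    ((¬ ∀ g, 0 < x j g → ¬ I.divisible i g) → I.util i (x j) ≤ I.util i (x i))

/-- EF1M: if `j`'s bundle contains (a positive fraction of) some good that `i` regards as
indivisible and values positively, the envy of `i` must vanish after removing some such good;
otherwise `i` does not envy `j`. -/
def EF1M (I : FairDivision n m) (x : Fin n → Fin m → ℝ) : Prop :=
  ∀ i j,
    ((∃ g, 0 < x j g ∧ ¬ I.divisible i g ∧ 0 < I.v i g) →
      ∃ g, 0 < x j g ∧ ¬ I.divisible i g ∧ 0 < I.v i g ∧
        I.utilMinus i (x j) g ≤ I.util i (x i)) ∧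
    ((¬ ∃ g, 0 < x j g ∧ ¬ I.divisible i g ∧ 0 < I.v i g) → I.util i (x j) ≤ I.util i (x i))

/-- Pareto optimality (among complete allocations). -/
def ParetoOptimal (I : FairDivision n m) (x : Fin n → Fin m → ℝ) : Prop :=
  ¬ ∃ y, I.IsAllocation y ∧ (∀ i, I.util i (x i) ≤ I.util i (y i)) ∧
    ∃ i, I.util i (x i) < I.util i (y i)

/-- In a 3-agent instance, `B` (a set of whole goods) is a reducible bundle with respect to
agent `i`: `u_i(B) ≥ (2/3)·MMS_i`, `u_j(M∖B) ≥ 2·MMS_j` for some agent `j ≠ i`, and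
`u_k(M∖B) ≥ (4/3)·MMS_k` for the remaining agent `k`. -/
def IsReducible (I : FairDivision 3 m) (B : Finset (Fin m)) (i : Fin 3) : Prop :=
  2 / 3 * I.MMS i ≤ ∑ g ∈ B, I.v i g ∧
    ∃ j, j ≠ i ∧ 2 * I.MMS j ≤ ∑ g ∈ Bᶜ, I.v j g ∧
      ∀ k, k ≠ i → k ≠ j → 4 / 3 * I.MMS k ≤ ∑ g ∈ Bᶜ, I.v k g

end FairDivision

section TwoAgentEFXMAux
open Finset FairDivision

lemma frUtil_one' {n m : ℕ} (I : FairDivision n m) (i : Fin n) (g : Fin m) : I.frUtil i g 1 = I.v i g := by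
  unfold FairDivision.frUtil; split <;> simp

lemma frUtil_zero' {n m : ℕ} (I : FairDivision n m) (i : Fin n) (g : Fin m) : I.frUtil i g 0 = 0 := by
  unfold FairDivision.frUtil
  split
  · ring
  · norm_num

lemma frUtil_nonneg' {n m : ℕ} (I : FairDivision n m) (i : Fin n) (g : Fin m) {t : ℝ} (ht : 0 ≤ t) :
    0 ≤ I.frUtil i g t := by
  unfold FairDivision.frUtil
  split
  · exact mul_nonneg ht (I.v_nonneg i g)
  · split
    · exact I.v_nonneg i g
    · exact le_refl 0


/-- balancing lemma (LPT-style): any finite set of goods with nonnegative weights can be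
split into two parts so that the heavier (offset) side exceeds the lighter by at most the
weight of any good on the heavy side, with escape clauses for empty sides. -/
lemma bal {α : Type*} [DecidableEq α] (w : α → ℝ) :
    ∀ (J : Finset α), (∀ g ∈ J, 0 ≤ w g) → ∀ x y : ℝ,
    ∃ U V : Finset α, Disjoint U V ∧ U ∪ V = J ∧
      (∀ g ∈ U, (x + ∑ h ∈ U, w h) - (y + ∑ h ∈ V, w h) ≤ w g) ∧
      (U = ∅ → (x + ∑ h ∈ U, w h) - (y + ∑ h ∈ V, w h) ≤ x - y) ∧
      (∀ g ∈ V, (y + ∑ h ∈ V, w h) - (x + ∑ h ∈ U, w h) ≤ w g) ∧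
      (V = ∅ → (y + ∑ h ∈ V, w h) - (x + ∑ h ∈ U, w h) ≤ y - x) := by
  intro J
  induction J using Finset.strongInductionOn with
  | _ J IH =>
    intro hw x y
    rcases J.eq_empty_or_nonempty with rfl | hne
    · exact ⟨∅, ∅, disjoint_bot_left, by simp, by simp, by simp, by simp, by simp⟩
    · obtain ⟨b, hb, hmax⟩ := Finset.exists_max_image J w hne
      have hwb : 0 ≤ w b := hw b hb
      have hsub : J.erase b ⊂ J := Finset.erase_ssubset hb
      have hw' : ∀ g ∈ J.erase b, 0 ≤ w g := fun g hg => hw g (Finset.mem_of_mem_erase hg)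
      by_cases hxy : x ≤ y
      · obtain ⟨U', V', hd, hcup, hU, heU, hV, heV⟩ := IH _ hsub hw' (x + w b) y
        have hbU : b ∉ U' := by
          intro h; have := hcup ▸ Finset.mem_union_left V' h
          exact Finset.notMem_erase b J this
        have hbV : b ∉ V' := by
          intro h; have := hcup ▸ Finset.mem_union_right U' h
          exact Finset.notMem_erase b J this
        refine ⟨insert b U', V', ?_, ?_, ?_, ?_, ?_, ?_⟩
        · exact Finset.disjoint_insert_left.mpr ⟨hbV, hd⟩
        · rw [Finset.insert_union, hcup, Finset.insert_erase hb]
        · intro g hg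
          rw [Finset.sum_insert hbU]
          have key : (x + w b + ∑ h ∈ U', w h) - (y + ∑ h ∈ V', w h) ≤ w b := by
            rcases U'.eq_empty_or_nonempty with rfl | ⟨u, hu⟩
            · have := heU rfl; simp at this ⊢; linarith
            · have h1 := hU u hu
              have h2 := hmax u (Finset.mem_of_mem_erase (hcup ▸ Finset.mem_union_left V' hu))
              linarith
          rcases Finset.mem_insert.mp hg with rfl | hg'
          · linarith [key]
          · have := hU g hg'; linarith
        · intro h; exact absurd h (Finset.insert_ne_empty _ _)
        · intro g hg
          rw [Finset.sum_insert hbU]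
          have := hV g hg; linarith
        · intro h
          rw [Finset.sum_insert hbU]
          have := heV h; linarith
      · push_neg at hxy
        obtain ⟨U', V', hd, hcup, hU, heU, hV, heV⟩ := IH _ hsub hw' x (y + w b)
        have hbU : b ∉ U' := by
          intro h; have := hcup ▸ Finset.mem_union_left V' h
          exact Finset.notMem_erase b J this
        have hbV : b ∉ V' := by
          intro h; have := hcup ▸ Finset.mem_union_right U' h
          exact Finset.notMem_erase b J this
        refine ⟨U', insert b V', ?_, ?_, ?_, ?_, ?_, ?_⟩
        · exact Finset.disjoint_insert_right.mpr ⟨hbU, hd⟩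
        · rw [Finset.union_insert, hcup, Finset.insert_erase hb]
        · intro g hg
          rw [Finset.sum_insert hbV]
          have := hU g hg; linarith
        · intro h
          rw [Finset.sum_insert hbV]
          have := heU h; linarith
        · intro g hg
          rw [Finset.sum_insert hbV]
          have key : (y + w b + ∑ h ∈ V', w h) - (x + ∑ h ∈ U', w h) ≤ w b := by
            rcases V'.eq_empty_or_nonempty with rfl | ⟨u, hu⟩
            · have := heV rfl; simp at this ⊢; linarith
            · have h1 := hV u hu
              have h2 := hmax u (Finset.mem_of_mem_erase (hcup ▸ Finset.mem_union_right U' hu))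
              linarith
          rcases Finset.mem_insert.mp hg with rfl | hg'
          · linarith [key]
          · have := hV g hg'; linarith
        · intro h; exact absurd h (Finset.insert_ne_empty _ _)


/-- crossing lemma: for positive weights, any target `μ ∈ (0, ∑ w]` can be bracketed by a
subset `C` and one extra element `s`. -/
lemma crossing {α : Type*} [DecidableEq α] (w : α → ℝ) :
    ∀ (D : Finset α), (∀ g ∈ D, 0 < w g) → ∀ μ : ℝ, 0 < μ → μ ≤ ∑ g ∈ D, w g →
    ∃ C s, C ⊆ D.erase s ∧ s ∈ D ∧ (∑ g ∈ C, w g) ≤ μ ∧ μ ≤ (∑ g ∈ C, w g) + w s := by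
  intro D
  induction D using Finset.strongInductionOn with
  | _ D IH =>
    intro hw μ hμ hμle
    rcases D.eq_empty_or_nonempty with rfl | ⟨s₀, hs₀⟩
    · simp at hμle; linarith
    by_cases hcase : μ ≤ w s₀
    · exact ⟨∅, s₀, Finset.empty_subset _, hs₀, by simp [le_of_lt hμ], by simpa using hcase⟩
    · push_neg at hcase
      have hsum : ∑ g ∈ D.erase s₀, w g = (∑ g ∈ D, w g) - w s₀ := Finset.sum_erase_eq_sub hs₀
      obtain ⟨C', s, hsub, hs, h1, h2⟩ := IH (D.erase s₀) (Finset.erase_ssubset hs₀)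
        (fun g hg => hw g (Finset.mem_of_mem_erase hg)) (μ - w s₀) (by linarith) (by linarith)
      have hss₀ : s ≠ s₀ := fun h => Finset.notMem_erase s₀ D (h ▸ hs)
      have hs₀C : s₀ ∉ C' := fun h =>
        Finset.notMem_erase s₀ D (Finset.mem_of_mem_erase (hsub h))
      refine ⟨insert s₀ C', s, ?_, Finset.mem_of_mem_erase hs, ?_, ?_⟩
      · intro g hg
        rcases Finset.mem_insert.mp hg with rfl | hg'
        · exact Finset.mem_erase.mpr ⟨hss₀.symm, hs₀⟩
        · have h := Finset.mem_erase.mp (hsub hg')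
          exact Finset.mem_erase.mpr ⟨h.1, Finset.mem_of_mem_erase h.2⟩
      · rw [Finset.sum_insert hs₀C]; linarith
      · rw [Finset.sum_insert hs₀C]; linarith


/-- core partition lemma: either an "EFX-style" partition (E all non-divisible, heavier,
with removal bound), or an exactly-balanced partition splitting one divisible good `s`. -/
lemma core {α : Type*} [DecidableEq α] (w : α → ℝ) (S D : Finset α) (hD : D ⊆ S)
    (hw : ∀ g ∈ S, 0 < w g) :
    (∃ E F, Disjoint E F ∧ E ∪ F = S ∧ Disjoint E D ∧
      (∑ g ∈ F, w g) ≤ (∑ g ∈ E, w g) ∧ ∀ g ∈ E, (∑ g' ∈ E, w g') - w g ≤ ∑ g' ∈ F, w g')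
    ∨ (∃ P Q s a, Disjoint P Q ∧ s ∉ P ∧ s ∉ Q ∧ insert s (P ∪ Q) = S ∧ s ∈ D ∧
        0 ≤ a ∧ a ≤ 1 ∧ (∑ g ∈ P, w g) + a * w s = (∑ g ∈ Q, w g) + (1 - a) * w s) := by
  classical
  set Iset := S \ D with hIset
  have hd0 : 0 ≤ ∑ g ∈ D, w g :=
    Finset.sum_nonneg fun g hg => le_of_lt (hw g (hD hg))
  have hInn : ∀ g ∈ Iset, 0 ≤ w g := fun g hg =>
    le_of_lt (hw g (Finset.mem_sdiff.mp hg).1)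
  obtain ⟨U, V, hUV, hcup, hU, heU, hV, heV⟩ := bal w Iset hInn 0 (∑ g ∈ D, w g)
  have hUI : U ⊆ Iset := hcup ▸ Finset.subset_union_left
  have hVI : V ⊆ Iset := hcup ▸ Finset.subset_union_right
  have hID : Disjoint Iset D := Finset.sdiff_disjoint
  have hUD : Disjoint U D := hID.mono_left hUI
  have hVD : Disjoint V D := hID.mono_left hVI
  set u := ∑ g ∈ U, w g with hu
  set vv := ∑ g ∈ V, w g with hvv
  set d := ∑ g ∈ D, w g with hd
  by_cases h1 : d + vv ≤ u
  · left
    refine ⟨U, V ∪ D, Finset.disjoint_union_right.mpr ⟨hUV, hUD⟩, ?_, hUD, ?_, ?_⟩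
    · rw [← Finset.union_assoc, hcup, hIset, Finset.sdiff_union_of_subset hD]
    · rw [Finset.sum_union hVD]; linarith
    · intro g hg
      have := hU g hg
      rw [Finset.sum_union hVD]
      linarith
  · push_neg at h1
    by_cases h2 : d + vv - u ≤ 2 * d
    · right
      set μ := (d + vv - u) / 2 with hμdef
      have hμ0 : 0 < μ := by simp only [hμdef]; linarith
      have hμd : μ ≤ d := by simp only [hμdef]; linarith
      obtain ⟨C, s, hCsub, hsD, hC1, hC2⟩ :=
        crossing w D (fun g hg => hw g (hD hg)) μ hμ0 (le_trans hμd (le_refl _))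
      have hCD : C ⊆ D := hCsub.trans (Finset.erase_subset _ _)
      have hws : 0 < w s := hw s (hD hsD)
      set c := ∑ g ∈ C, w g with hc
      set a := (μ - c) / (w s) with ha
      have ha0 : 0 ≤ a := div_nonneg (by linarith) (le_of_lt hws)
      have ha1 : a ≤ 1 := (div_le_one hws).mpr (by linarith)
      have haw : a * w s = μ - c := div_mul_cancel₀ _ (ne_of_gt hws)
      have hsU : s ∉ U := fun h => (Finset.mem_sdiff.mp (hUI h)).2 hsD
      have hsV : s ∉ V := fun h => (Finset.mem_sdiff.mp (hVI h)).2 hsD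
      have hsC : s ∉ C := fun h => Finset.notMem_erase s D (hCsub h)
      have hUC : Disjoint U C := hUD.mono_right hCD
      have hVC : Disjoint V C := hVD.mono_right hCD
      have hErC : (D.erase s) \ C ⊆ D := (Finset.sdiff_subset).trans (Finset.erase_subset _ _)
      refine ⟨U ∪ C, V ∪ ((D.erase s) \ C), s, a, ?_, ?_, ?_, ?_, hsD, ha0, ha1, ?_⟩
      · refine Finset.disjoint_union_left.mpr ⟨?_, ?_⟩
        · exact Finset.disjoint_union_right.mpr ⟨hUV, hUD.mono_right hErC⟩
        · refine Finset.disjoint_union_right.mpr ⟨hVC.symm, Finset.disjoint_sdiff⟩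
      · simp [hsU, hsC]
      · simp only [Finset.mem_union]
        rintro (h | h)
        · exact hsV h
        · exact (Finset.mem_sdiff.mp h).1 |> fun hh => Finset.notMem_erase s D hh
      · have hCer : C ∪ ((D.erase s) \ C) = D.erase s := Finset.union_sdiff_of_subset hCsub
        have : (U ∪ C) ∪ (V ∪ ((D.erase s) \ C)) = Iset ∪ D.erase s := by
          have h5 : (U ∪ C) ∪ (V ∪ ((D.erase s) \ C)) = (U ∪ V) ∪ (C ∪ ((D.erase s) \ C)) := by
            ac_rfl
          rw [h5, hcup, hCer]
        rw [this, ← Finset.union_insert, Finset.insert_erase hsD, hIset,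
          Finset.sdiff_union_of_subset hD]
      · have hsum1 : ∑ g ∈ U ∪ C, w g = u + c := Finset.sum_union hUC
        have hsum2 : ∑ g ∈ (D.erase s) \ C, w g = (d - w s) - c := by
          have h3 : ∑ g ∈ D.erase s, w g = d - w s := Finset.sum_erase_eq_sub hsD
          have h4 := Finset.sum_sdiff (f := w) hCsub
          linarith
        have hsum3 : ∑ g ∈ V ∪ ((D.erase s) \ C), w g = vv + ((d - w s) - c) := by
          rw [Finset.sum_union (hVD.mono_right hErC), hsum2]
        have hexp : (1 - a) * w s = w s - a * w s := by ring
        rw [hsum1, hsum3, hexp, haw]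
        linarith [hμdef]
    · push_neg at h2
      left
      refine ⟨V, U ∪ D, Finset.disjoint_union_right.mpr ⟨hUV.symm, hVD⟩, ?_, hVD, ?_, ?_⟩
      · have : V ∪ (U ∪ D) = (U ∪ V) ∪ D := by ac_rfl
        rw [this, hcup, hIset, Finset.sdiff_union_of_subset hD]
      · rw [Finset.sum_union hUD]; linarith
      · intro g hg
        have := hV g hg
        rw [Finset.sum_union hUD]
        linarith

lemma assemble {m : ℕ} (I : FairDivision 2 m)
    (s : Fin m) (A B : Finset (Fin m)) (t r : ℝ)
    (hsA : s ∉ A) (hsB : s ∉ B) (hAB : Disjoint A B)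
    (hcov : ∀ g, g ≠ s → g ∈ A ∨ g ∈ B)
    (ht0 : 0 ≤ t) (hr0 : 0 ≤ r) (htr : t + r ≤ 1)
    (hA : ∀ g ∈ A, 0 < I.v 0 g) (hB : ∀ g ∈ B, 0 < I.v 1 g)
    (hNW0 : 0 < t → 0 < I.frUtil 0 s t) (hNW1 : 0 < r → 0 < I.frUtil 1 s r)
    (hEF2 : (∑ g ∈ A, I.v 1 g) + I.frUtil 1 s t ≤ (∑ g ∈ B, I.v 1 g) + I.frUtil 1 s r)
    (hEF1 : ((∑ g ∈ B, I.v 0 g) + I.frUtil 0 s r ≤ (∑ g ∈ A, I.v 0 g) + I.frUtil 0 s t) ∨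
      ((∀ g ∈ B, ¬ I.divisible 0 g) ∧ (0 < r → ¬ I.divisible 0 s) ∧
       (∀ g ∈ B, 0 < I.v 0 g →
         (∑ g' ∈ B, I.v 0 g') + I.frUtil 0 s r - I.v 0 g ≤ (∑ g ∈ A, I.v 0 g) + I.frUtil 0 s t) ∧
       (0 < r → 0 < I.v 0 s →
         (∑ g' ∈ B, I.v 0 g') ≤ (∑ g ∈ A, I.v 0 g) + I.frUtil 0 s t))) :
    ∃ (gstar : Fin m) (x : Fin 2 → Fin m → ℝ),
      I.IsPartialAllocation x ∧ (∀ g, g ≠ gstar → ∑ i, x i g = 1) ∧ I.EFXM x ∧ I.NonWasteful x := by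
  classical
  set f : Finset (Fin m) → ℝ → Fin m → ℝ :=
    fun C c g => if g = s then c else if g ∈ C then 1 else 0 with hf
  have h10 : (1 : Fin 2) ≠ 0 := by decide
  set x : Fin 2 → Fin m → ℝ := fun i => if i = 0 then f A t else f B r with hx
  have hx0 : x 0 = f A t := by simp [hx]
  have hx1 : x 1 = f B r := by simp [hx, h10]
  have ht1 : t ≤ 1 := by linarith
  have hr1 : r ≤ 1 := by linarith
  have hfb : ∀ (C : Finset (Fin m)) (c : ℝ), 0 ≤ c → c ≤ 1 → ∀ g, 0 ≤ f C c g ∧ f C c g ≤ 1 := by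
    intro C c h0 h1 g
    simp only [hf]
    split_ifs
    · exact ⟨h0, h1⟩
    · norm_num
    · norm_num
  have hutil : ∀ (i : Fin 2) (C : Finset (Fin m)) (c : ℝ), s ∉ C →
      I.util i (f C c) = I.frUtil i s c + ∑ g ∈ C, I.v i g := by
    intro i C c hsC
    unfold FairDivision.util
    rw [← Finset.add_sum_erase _ _ (Finset.mem_univ s)]
    have hfs : f C c s = c := by simp [hf]
    rw [hfs]
    congr 1
    have hstep : ∀ g ∈ Finset.univ.erase s,
        I.frUtil i g (f C c g) = if g ∈ C then I.v i g else 0 := by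
      intro g hg
      have hgs : g ≠ s := (Finset.mem_erase.mp hg).1
      simp only [hf, if_neg hgs]
      split_ifs with hgC
      · exact frUtil_one' I i g
      · exact frUtil_zero' I i g
    rw [Finset.sum_congr rfl hstep, Finset.sum_ite_mem]
    congr 1
    exact Finset.inter_eq_right.mpr
      (fun g hg => Finset.mem_erase.mpr ⟨fun h => hsC (h ▸ hg), Finset.mem_univ g⟩)
  have hu : ∀ i : Fin 2, I.util i (x 0) = I.frUtil i s t + ∑ g ∈ A, I.v i g := fun i => by
    rw [hx0]; exact hutil i A t hsA
  have hu' : ∀ i : Fin 2, I.util i (x 1) = I.frUtil i s r + ∑ g ∈ B, I.v i g := fun i => by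
    rw [hx1]; exact hutil i B r hsB
  have fin2 : ∀ i : Fin 2, i = 0 ∨ i = 1 := by decide
  have hbounds : ∀ i g, 0 ≤ x i g ∧ x i g ≤ 1 := by
    intro i g
    rcases fin2 i with rfl | rfl
    · rw [show x 0 = f A t from hx0]; exact hfb A t ht0 ht1 g
    · rw [show x 1 = f B r from hx1]; exact hfb B r hr0 hr1 g
  have hfr_nn : ∀ (i j : Fin 2) (g : Fin m), 0 ≤ I.frUtil i g (x j g) := fun i j g =>
    frUtil_nonneg' I i g (hbounds j g).1
  have hx1mem : ∀ g, g ≠ s → 0 < x 1 g → g ∈ B := by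
    intro g hgs hpos
    by_contra hgB
    rw [hx1] at hpos
    simp only [hf, if_neg hgs, if_neg hgB] at hpos
    exact lt_irrefl 0 hpos
  have hx0mem : ∀ g, g ≠ s → 0 < x 0 g → g ∈ A := by
    intro g hgs hpos
    by_contra hgA
    rw [hx0] at hpos
    simp only [hf, if_neg hgs, if_neg hgA] at hpos
    exact lt_irrefl 0 hpos
  have hxs0 : x 0 s = t := by rw [hx0]; simp [hf]
  have hxs1 : x 1 s = r := by rw [hx1]; simp [hf]
  have hxg0 : ∀ g, g ≠ s → g ∈ A → x 0 g = 1 := by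
    intro g hgs hgA; rw [hx0]; simp [hf, if_neg hgs, hgA]
  have hxg1 : ∀ g, g ≠ s → g ∈ B → x 1 g = 1 := by
    intro g hgs hgB; rw [hx1]; simp [hf, if_neg hgs, hgB]
  have hsum : ∀ g, g ≠ s → ∑ i, x i g = 1 := by
    intro g hg
    rw [Fin.sum_univ_two, hx0, hx1]
    simp only [hf, if_neg hg]
    rcases hcov g hg with hgA | hgB
    · rw [if_pos hgA, if_neg (Finset.disjoint_left.mp hAB hgA)]; norm_num
    · rw [if_neg (fun h => Finset.disjoint_left.mp hAB h hgB), if_pos hgB]; norm_num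
  have hsum' : ∀ g, ∑ i, x i g ≤ 1 := by
    intro g
    by_cases hg : g = s
    · subst hg
      rw [Fin.sum_univ_two, hxs0, hxs1]; linarith
    · exact le_of_eq (hsum g hg)
  have hMinus : ∀ (i : Fin 2) (b : Fin m → ℝ) (g : Fin m),
      I.utilMinus i b g = I.util i b - I.frUtil i g (b g) := by
    intro i b g
    unfold FairDivision.utilMinus FairDivision.util
    rw [Finset.sum_erase_eq_sub (Finset.mem_univ g)]
  have hEFpair : ∀ i j : Fin 2, I.util i (x j) ≤ I.util i (x i) →
      (((∀ g, 0 < x j g → ¬ I.divisible i g) →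
        ∀ g, 0 < x j g → 0 < I.v i g → I.utilMinus i (x j) g ≤ I.util i (x i)) ∧
       ((¬ ∀ g, 0 < x j g → ¬ I.divisible i g) → I.util i (x j) ≤ I.util i (x i))) := by
    intro i j h
    refine ⟨fun _ g _ _ => ?_, fun _ => h⟩
    rw [hMinus]
    have := hfr_nn i j g
    linarith
  have hefxm : I.EFXM x := by
    intro i j
    rcases fin2 i with rfl | rfl <;> rcases fin2 j with rfl | rfl
    · exact hEFpair 0 0 (le_refl _)
    · -- i = 0, j = 1 : the key pair
      rcases hEF1 with hEF | ⟨hind, hinds, hefx, hefxs⟩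
      · apply hEFpair
        rw [hu 0, hu' 0]
        linarith
      · constructor
        · intro _ g hgpos hgval
          rw [hMinus]
          by_cases hgs : g = s
          · subst hgs
            rw [hxs1] at hgpos
            rw [hu' 0, hu 0, hxs1]
            have := hefxs hgpos hgval
            linarith
          · have hgB : g ∈ B := hx1mem g hgs hgpos
            rw [hu' 0, hu 0, hxg1 g hgs hgB, frUtil_one']
            have := hefx g hgB hgval
            linarith
        · intro hcon
          exfalso
          push_neg at hcon
          obtain ⟨g, hgpos, hgdiv⟩ := hcon
          by_cases hgs : g = s
          · subst hgs
            rw [hxs1] at hgpos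
            exact hinds hgpos hgdiv
          · exact hind g (hx1mem g hgs hgpos) hgdiv
    · -- i = 1, j = 0
      apply hEFpair
      rw [hu 1, hu' 1]
      linarith
    · exact hEFpair 1 1 (le_refl _)
  have hnw : I.NonWasteful x := by
    intro i g hpos
    rcases fin2 i with rfl | rfl
    · by_cases hgs : g = s
      · subst hgs
        rw [hxs0] at hpos ⊢
        exact hNW0 hpos
      · have hgA := hx0mem g hgs hpos
        rw [hxg0 g hgs hgA, frUtil_one']
        exact hA g hgA
    · by_cases hgs : g = s
      · subst hgs
        rw [hxs1] at hpos ⊢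
        exact hNW1 hpos
      · have hgB := hx1mem g hgs hpos
        rw [hxg1 g hgs hgB, frUtil_one']
        exact hB g hgB
  exact ⟨s, x, ⟨hbounds, hsum'⟩, hsum, hefxm, hnw⟩

lemma assembleWhole {m : ℕ} (hm : 0 < m) (I : FairDivision 2 m)
    (A₀ B₀ : Finset (Fin m)) (hdisj : Disjoint A₀ B₀) (hcov : ∀ g, g ∈ A₀ ∨ g ∈ B₀)
    (hA : ∀ g ∈ A₀, 0 < I.v 0 g) (hB : ∀ g ∈ B₀, 0 < I.v 1 g)
    (hEF2 : (∑ g ∈ A₀, I.v 1 g) ≤ ∑ g ∈ B₀, I.v 1 g)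
    (hEF1 : ((∑ g ∈ B₀, I.v 0 g) ≤ ∑ g ∈ A₀, I.v 0 g) ∨
      ((∀ g ∈ B₀, ¬ I.divisible 0 g) ∧
       (∀ g ∈ B₀, 0 < I.v 0 g → (∑ g' ∈ B₀, I.v 0 g') - I.v 0 g ≤ ∑ g ∈ A₀, I.v 0 g))) :
    ∃ (gstar : Fin m) (x : Fin 2 → Fin m → ℝ),
      I.IsPartialAllocation x ∧ (∀ g, g ≠ gstar → ∑ i, x i g = 1) ∧ I.EFXM x ∧ I.NonWasteful x := by
  classical
  rcases A₀.eq_empty_or_nonempty with hA0 | ⟨s, hs⟩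
  · have hsB : ∀ g, g ∈ B₀ := by
      intro g; rcases hcov g with h | h
      · rw [hA0] at h; exact absurd h (Finset.notMem_empty g)
      · exact h
    have s : Fin m := ⟨0, hm⟩
    have hsB' : (⟨0, hm⟩ : Fin m) ∈ B₀ := hsB _
    have hsumB : (∑ g ∈ B₀.erase ⟨0, hm⟩, I.v 0 g) + I.v 0 ⟨0, hm⟩ = ∑ g ∈ B₀, I.v 0 g :=
      Finset.sum_erase_add _ _ hsB'
    have hsumB1 : (∑ g ∈ B₀.erase ⟨0, hm⟩, I.v 1 g) + I.v 1 ⟨0, hm⟩ = ∑ g ∈ B₀, I.v 1 g :=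
      Finset.sum_erase_add _ _ hsB'
    apply assemble I ⟨0, hm⟩ ∅ (B₀.erase ⟨0, hm⟩) 0 1
    · exact Finset.notMem_empty _
    · exact Finset.notMem_erase _ _
    · exact Finset.disjoint_empty_left _
    · intro g hg
      exact Or.inr (Finset.mem_erase.mpr ⟨hg, hsB g⟩)
    · norm_num
    · norm_num
    · norm_num
    · intro g hg; exact absurd hg (Finset.notMem_empty g)
    · intro g hg; exact hB g (Finset.mem_of_mem_erase hg)
    · intro h; exact absurd h (lt_irrefl 0)
    · intro _; rw [frUtil_one']; exact hB _ hsB'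
    · rw [frUtil_one', frUtil_zero']
      have h1 : (0:ℝ) ≤ ∑ g ∈ B₀.erase ⟨0, hm⟩, I.v 1 g :=
        Finset.sum_nonneg fun g _ => I.v_nonneg 1 g
      have h2 : (0:ℝ) ≤ I.v 1 ⟨0, hm⟩ := I.v_nonneg 1 _
      simp only [Finset.sum_empty]
      linarith
    · rcases hEF1 with h | ⟨hind, hefx⟩
      · left
        rw [frUtil_one', frUtil_zero']
        rw [hA0] at h
        simp only [Finset.sum_empty] at h ⊢
        linarith
      · right
        refine ⟨fun g hg => hind g (Finset.mem_of_mem_erase hg), fun _ => hind _ hsB',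
          ?_, ?_⟩
        · intro g hg hgv
          rw [frUtil_one', frUtil_zero']
          have := hefx g (Finset.mem_of_mem_erase hg) hgv
          rw [hA0] at this
          simp only [Finset.sum_empty] at this ⊢
          linarith
        · intro _ hgv
          rw [frUtil_zero']
          have := hefx _ hsB' hgv
          rw [hA0] at this
          simp only [Finset.sum_empty] at this ⊢
          linarith
  · have hsB : s ∉ B₀ := Finset.disjoint_left.mp hdisj hs
    have hsumA : (∑ g ∈ A₀.erase s, I.v 0 g) + I.v 0 s = ∑ g ∈ A₀, I.v 0 g :=
      Finset.sum_erase_add _ _ hs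
    have hsumA1 : (∑ g ∈ A₀.erase s, I.v 1 g) + I.v 1 s = ∑ g ∈ A₀, I.v 1 g :=
      Finset.sum_erase_add _ _ hs
    apply assemble I s (A₀.erase s) B₀ 1 0
    · exact Finset.notMem_erase _ _
    · exact hsB
    · exact hdisj.mono_left (Finset.erase_subset _ _)
    · intro g hg
      rcases hcov g with h | h
      · exact Or.inl (Finset.mem_erase.mpr ⟨hg, h⟩)
      · exact Or.inr h
    · norm_num
    · norm_num
    · norm_num
    · intro g hg; exact hA g (Finset.mem_of_mem_erase hg)
    · exact hB
    · intro _; rw [frUtil_one']; exact hA s hs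
    · intro h; exact absurd h (lt_irrefl 0)
    · rw [frUtil_one', frUtil_zero']
      have h2 : (0:ℝ) ≤ ∑ g ∈ B₀, I.v 1 g := Finset.sum_nonneg fun g _ => I.v_nonneg 1 g
      linarith
    · rcases hEF1 with h | ⟨hind, hefx⟩
      · left
        rw [frUtil_one', frUtil_zero']
        linarith
      · right
        refine ⟨hind, fun h => absurd h (lt_irrefl 0), ?_, fun h => absurd h (lt_irrefl 0)⟩
        intro g hg hgv
        rw [frUtil_one', frUtil_zero']
        have := hefx g hg hgv
        linarith

end TwoAgentEFXMAux

/-- For every two-agent instance (with every good positively valued by some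
agent, and every good an agent regards as divisible positively valued by that agent), there
are a good `gstar` and a partial allocation fully allocating every good other than `gstar`
that is both EFXM and non-wasteful. -/
theorem two_agent_efxm_nonwasteful_with_charity (m : ℕ) (hm : 0 < m)
    (I : FairDivision 2 m)
    (hpos : ∀ g, ∃ i, 0 < I.v i g)
    (hdiv : ∀ i g, I.divisible i g → 0 < I.v i g) :
    ∃ (gstar : Fin m) (x : Fin 2 → Fin m → ℝ),
      I.IsPartialAllocation x ∧
      (∀ g, g ≠ gstar → ∑ i, x i g = 1) ∧
      I.EFXM x ∧ I.NonWasteful x := by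
  classical
  have fin2 : ∀ i : Fin 2, i = 0 ∨ i = 1 := by decide
  set Z1 := Finset.univ.filter (fun g : Fin m => I.v 1 g = 0) with hZ1
  set Z2 := Finset.univ.filter (fun g : Fin m => I.v 0 g = 0) with hZ2
  set S := Finset.univ.filter (fun g : Fin m => 0 < I.v 0 g ∧ 0 < I.v 1 g) with hSdef
  set D := S.filter (fun g => I.divisible 0 g) with hDdef
  have hmemS : ∀ g, g ∈ S ↔ (0 < I.v 0 g ∧ 0 < I.v 1 g) := by
    intro g; simp [hSdef]
  have hmemZ1 : ∀ g, g ∈ Z1 ↔ I.v 1 g = 0 := by intro g; simp [hZ1]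
  have hmemZ2 : ∀ g, g ∈ Z2 ↔ I.v 0 g = 0 := by intro g; simp [hZ2]
  have hDsub : D ⊆ S := Finset.filter_subset _ _
  have hwS : ∀ g ∈ S, 0 < I.v 0 g := fun g hg => ((hmemS g).mp hg).1
  have hw1S : ∀ g ∈ S, 0 < I.v 1 g := fun g hg => ((hmemS g).mp hg).2
  have hZ1pos : ∀ g ∈ Z1, 0 < I.v 0 g := by
    intro g hg
    rcases hpos g with ⟨i, hi⟩
    rcases fin2 i with rfl | rfl
    · exact hi
    · rw [(hmemZ1 g).mp hg] at hi; exact absurd hi (lt_irrefl 0)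
  have hZ2pos : ∀ g ∈ Z2, 0 < I.v 1 g := by
    intro g hg
    rcases hpos g with ⟨i, hi⟩
    rcases fin2 i with rfl | rfl
    · rw [(hmemZ2 g).mp hg] at hi; exact absurd hi (lt_irrefl 0)
    · exact hi
  have hcovS : ∀ g : Fin m, g ∈ S ∨ g ∈ Z1 ∨ g ∈ Z2 := by
    intro g
    rcases eq_or_lt_of_le (I.v_nonneg 0 g) with h0 | h0
    · exact Or.inr (Or.inr ((hmemZ2 g).mpr h0.symm))
    · rcases eq_or_lt_of_le (I.v_nonneg 1 g) with h1 | h1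
      · exact Or.inr (Or.inl ((hmemZ1 g).mpr h1.symm))
      · exact Or.inl ((hmemS g).mpr ⟨h0, h1⟩)
  have hdSZ1 : Disjoint S Z1 := by
    rw [Finset.disjoint_left]
    intro g hgS hgZ
    have := hw1S g hgS
    rw [(hmemZ1 g).mp hgZ] at this
    exact absurd this (lt_irrefl 0)
  have hdSZ2 : Disjoint S Z2 := by
    rw [Finset.disjoint_left]
    intro g hgS hgZ
    have := hwS g hgS
    rw [(hmemZ2 g).mp hgZ] at this
    exact absurd this (lt_irrefl 0)
  have hdZ12 : Disjoint Z1 Z2 := by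
    rw [Finset.disjoint_left]
    intro g hg1 hg2
    have := hZ1pos g hg1
    rw [(hmemZ2 g).mp hg2] at this
    exact absurd this (lt_irrefl 0)
  have hZ2ind : ∀ g ∈ Z2, ¬ I.divisible 0 g := by
    intro g hg hdv
    have := hdiv 0 g hdv
    rw [(hmemZ2 g).mp hg] at this
    exact absurd this (lt_irrefl 0)
  have hZ1z : ∑ g ∈ Z1, I.v 1 g = 0 := Finset.sum_eq_zero fun g hg => (hmemZ1 g).mp hg
  have hZ2z : ∑ g ∈ Z2, I.v 0 g = 0 := Finset.sum_eq_zero fun g hg => (hmemZ2 g).mp hg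
  have hZ1nn : 0 ≤ ∑ g ∈ Z1, I.v 0 g := Finset.sum_nonneg fun g _ => I.v_nonneg 0 g
  have hZ2nn : 0 ≤ ∑ g ∈ Z2, I.v 1 g := Finset.sum_nonneg fun g _ => I.v_nonneg 1 g
  rcases core (I.v 0) S D hDsub hwS with
    ⟨E, F, hEF, hEFcup, hED, hFle, hEFX⟩ | ⟨P, Q, s, a, hPQ, hsP, hsQ, hcup, hsD, ha0, ha1, heq⟩
  · -- whole-goods case
    have hE_S : E ⊆ S := hEFcup ▸ Finset.subset_union_left
    have hF_S : F ⊆ S := hEFcup ▸ Finset.subset_union_right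
    have hEind : ∀ g ∈ E, ¬ I.divisible 0 g := by
      intro g hg hdv
      exact (Finset.disjoint_left.mp hED hg)
        (Finset.mem_filter.mpr ⟨hE_S hg, hdv⟩)
    by_cases hch : (∑ g ∈ E, I.v 1 g) ≤ ∑ g ∈ F, I.v 1 g
    · -- agent 2 takes the F-side
      apply assembleWhole hm I (E ∪ Z1) (F ∪ Z2)
      · refine Finset.disjoint_union_left.mpr ⟨?_, ?_⟩
        · exact Finset.disjoint_union_right.mpr ⟨hEF, hdSZ2.mono_left hE_S⟩
        · exact Finset.disjoint_union_right.mpr ⟨(hdSZ1.mono_left hF_S).symm, hdZ12⟩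
      · intro g
        rcases hcovS g with hg | hg | hg
        · rw [← hEFcup] at hg
          rcases Finset.mem_union.mp hg with h | h
          · exact Or.inl (Finset.mem_union_left _ h)
          · exact Or.inr (Finset.mem_union_left _ h)
        · exact Or.inl (Finset.mem_union_right _ hg)
        · exact Or.inr (Finset.mem_union_right _ hg)
      · intro g hg
        rcases Finset.mem_union.mp hg with h | h
        · exact hwS g (hE_S h)
        · exact hZ1pos g h
      · intro g hg
        rcases Finset.mem_union.mp hg with h | h
        · exact hw1S g (hF_S h)
        · exact hZ2pos g h
      · rw [Finset.sum_union (hdSZ1.mono_left hE_S),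
          Finset.sum_union (hdSZ2.mono_left hF_S), hZ1z]
        linarith
      · left
        rw [Finset.sum_union (hdSZ1.mono_left hE_S),
          Finset.sum_union (hdSZ2.mono_left hF_S), hZ2z]
        linarith
    · -- agent 2 takes the E-side
      push_neg at hch
      apply assembleWhole hm I (F ∪ Z1) (E ∪ Z2)
      · refine Finset.disjoint_union_left.mpr ⟨?_, ?_⟩
        · exact Finset.disjoint_union_right.mpr ⟨hEF.symm, hdSZ2.mono_left hF_S⟩
        · exact Finset.disjoint_union_right.mpr ⟨(hdSZ1.mono_left hE_S).symm, hdZ12⟩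
      · intro g
        rcases hcovS g with hg | hg | hg
        · rw [← hEFcup] at hg
          rcases Finset.mem_union.mp hg with h | h
          · exact Or.inr (Finset.mem_union_left _ h)
          · exact Or.inl (Finset.mem_union_left _ h)
        · exact Or.inl (Finset.mem_union_right _ hg)
        · exact Or.inr (Finset.mem_union_right _ hg)
      · intro g hg
        rcases Finset.mem_union.mp hg with h | h
        · exact hwS g (hF_S h)
        · exact hZ1pos g h
      · intro g hg
        rcases Finset.mem_union.mp hg with h | h
        · exact hw1S g (hE_S h)
        · exact hZ2pos g h
      · rw [Finset.sum_union (hdSZ1.mono_left hF_S),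
          Finset.sum_union (hdSZ2.mono_left hE_S), hZ1z]
        linarith
      · right
        constructor
        · intro g hg
          rcases Finset.mem_union.mp hg with h | h
          · exact hEind g h
          · exact hZ2ind g h
        · intro g hg hgv
          have hgE : g ∈ E := by
            rcases Finset.mem_union.mp hg with h | h
            · exact h
            · rw [(hmemZ2 g).mp h] at hgv; exact absurd hgv (lt_irrefl 0)
          rw [Finset.sum_union (hdSZ1.mono_left hF_S),
            Finset.sum_union (hdSZ2.mono_left hE_S), hZ2z]
          have := hEFX g hgE
          linarith
  · -- split case
    have hPQsub : P ∪ Q ⊆ S := by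
      rw [← hcup]; exact Finset.subset_insert _ _
    have hP_S : P ⊆ S := (Finset.subset_union_left).trans hPQsub
    have hQ_S : Q ⊆ S := (Finset.subset_union_right).trans hPQsub
    have hsS : s ∈ S := hcup ▸ Finset.mem_insert_self s _
    have hdiv0s : I.divisible 0 s := (Finset.mem_filter.mp hsD).2
    have hv0s : 0 < I.v 0 s := hwS s hsS
    have hv1s : 0 < I.v 1 s := hw1S s hsS
    have hsZ1 : s ∉ Z1 := Finset.disjoint_left.mp hdSZ1 hsS
    have hsZ2 : s ∉ Z2 := Finset.disjoint_left.mp hdSZ2 hsS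
    have hfr0 : ∀ c : ℝ, I.frUtil 0 s c = c * I.v 0 s := by
      intro c; unfold FairDivision.frUtil; rw [if_pos hdiv0s]
    set b := 1 - a with hb
    have hb0 : 0 ≤ b := by rw [hb]; linarith
    have hb1 : b ≤ 1 := by rw [hb]; linarith
    -- common membership facts
    have hcovMain : ∀ g : Fin m, g ≠ s → (g ∈ P ∨ g ∈ Q) ∨ g ∈ Z1 ∨ g ∈ Z2 := by
      intro g hg
      rcases hcovS g with hgS | h | h
      · rw [← hcup] at hgS
        rcases Finset.mem_insert.mp hgS with h | h
        · exact absurd h hg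
        · exact Or.inl (Finset.mem_union.mp h)
      · exact Or.inr (Or.inl h)
      · exact Or.inr (Or.inr h)
    by_cases hch : (∑ g ∈ Q, I.v 1 g) + I.frUtil 1 s b ≤ (∑ g ∈ P, I.v 1 g) + I.frUtil 1 s a
    · -- agent 2 takes the P-side (with fraction a of s, if she can hold it)
      set r := if (I.divisible 1 s ∨ a = 1) then a else 0 with hr
      have hra : I.frUtil 1 s r = I.frUtil 1 s a := by
        by_cases hc : I.divisible 1 s ∨ a = 1
        · rw [hr, if_pos hc]
        · push_neg at hc
          rw [hr, if_neg (by push_neg; exact hc)]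
          rw [frUtil_zero']
          unfold FairDivision.frUtil
          rw [if_neg hc.1, if_neg hc.2]
      have hr0' : 0 ≤ r := by
        rw [hr]; split_ifs
        · exact ha0
        · exact le_refl 0
      have hrlea : r ≤ a := by
        rw [hr]; split_ifs
        · exact le_refl a
        · exact ha0
      apply assemble I s (Q ∪ Z1) (P ∪ Z2) b r
      · simp only [Finset.mem_union]; rintro (h | h)
        · exact hsQ h
        · exact hsZ1 h
      · simp only [Finset.mem_union]; rintro (h | h)
        · exact hsP h
        · exact hsZ2 h
      · refine Finset.disjoint_union_left.mpr ⟨?_, ?_⟩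
        · exact Finset.disjoint_union_right.mpr ⟨hPQ.symm, hdSZ2.mono_left hQ_S⟩
        · exact Finset.disjoint_union_right.mpr ⟨(hdSZ1.mono_left hP_S).symm, hdZ12⟩
      · intro g hg
        rcases hcovMain g hg with (h | h) | h | h
        · exact Or.inr (Finset.mem_union_left _ h)
        · exact Or.inl (Finset.mem_union_left _ h)
        · exact Or.inl (Finset.mem_union_right _ h)
        · exact Or.inr (Finset.mem_union_right _ h)
      · exact hb0
      · exact hr0'
      · rw [hb]; linarith
      · intro g hg
        rcases Finset.mem_union.mp hg with h | h
        · exact hwS g (hQ_S h)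
        · exact hZ1pos g h
      · intro g hg
        rcases Finset.mem_union.mp hg with h | h
        · exact hw1S g (hP_S h)
        · exact hZ2pos g h
      · intro hbpos
        rw [hfr0]
        exact mul_pos hbpos hv0s
      · intro hrpos
        by_cases hd2 : I.divisible 1 s
        · have : I.frUtil 1 s r = r * I.v 1 s := by
            unfold FairDivision.frUtil; rw [if_pos hd2]
          rw [this]; exact mul_pos hrpos hv1s
        · have hcnd : I.divisible 1 s ∨ a = 1 := by
            by_contra hcnd
            rw [hr, if_neg hcnd] at hrpos
            exact absurd hrpos (lt_irrefl 0)
          have ha1' : a = 1 := hcnd.resolve_left hd2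
          have : r = 1 := by rw [hr, if_pos hcnd, ha1']
          rw [this, frUtil_one']
          exact hv1s
      · rw [hra, Finset.sum_union (hdSZ1.mono_left hQ_S),
          Finset.sum_union (hdSZ2.mono_left hP_S), hZ1z]
        linarith
      · left
        rw [hfr0, hfr0, Finset.sum_union (hdSZ1.mono_left hQ_S),
          Finset.sum_union (hdSZ2.mono_left hP_S), hZ2z]
        have hmul : r * I.v 0 s ≤ a * I.v 0 s :=
          mul_le_mul_of_nonneg_right hrlea (le_of_lt hv0s)
        linarith [heq, hmul, hZ1nn]
    · -- agent 2 takes the Q-side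
      push_neg at hch
      set r := if (I.divisible 1 s ∨ b = 1) then b else 0 with hr
      have hra : I.frUtil 1 s r = I.frUtil 1 s b := by
        by_cases hc : I.divisible 1 s ∨ b = 1
        · rw [hr, if_pos hc]
        · push_neg at hc
          rw [hr, if_neg (by push_neg; exact hc)]
          rw [frUtil_zero']
          unfold FairDivision.frUtil
          rw [if_neg hc.1, if_neg hc.2]
      have hr0' : 0 ≤ r := by
        rw [hr]; split_ifs
        · exact hb0
        · exact le_refl 0
      have hrleb : r ≤ b := by
        rw [hr]; split_ifs
        · exact le_refl b
        · exact hb0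
      apply assemble I s (P ∪ Z1) (Q ∪ Z2) a r
      · simp only [Finset.mem_union]; rintro (h | h)
        · exact hsP h
        · exact hsZ1 h
      · simp only [Finset.mem_union]; rintro (h | h)
        · exact hsQ h
        · exact hsZ2 h
      · refine Finset.disjoint_union_left.mpr ⟨?_, ?_⟩
        · exact Finset.disjoint_union_right.mpr ⟨hPQ, hdSZ2.mono_left hP_S⟩
        · exact Finset.disjoint_union_right.mpr ⟨(hdSZ1.mono_left hQ_S).symm, hdZ12⟩
      · intro g hg
        rcases hcovMain g hg with (h | h) | h | h
        · exact Or.inl (Finset.mem_union_left _ h)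
        · exact Or.inr (Finset.mem_union_left _ h)
        · exact Or.inl (Finset.mem_union_right _ h)
        · exact Or.inr (Finset.mem_union_right _ h)
      · exact ha0
      · exact hr0'
      · rw [hb] at hrleb; linarith
      · intro g hg
        rcases Finset.mem_union.mp hg with h | h
        · exact hwS g (hP_S h)
        · exact hZ1pos g h
      · intro g hg
        rcases Finset.mem_union.mp hg with h | h
        · exact hw1S g (hQ_S h)
        · exact hZ2pos g h
      · intro hapos
        rw [hfr0]
        exact mul_pos hapos hv0s
      · intro hrpos
        by_cases hd2 : I.divisible 1 s
        · have : I.frUtil 1 s r = r * I.v 1 s := by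
            unfold FairDivision.frUtil; rw [if_pos hd2]
          rw [this]; exact mul_pos hrpos hv1s
        · have hcnd : I.divisible 1 s ∨ b = 1 := by
            by_contra hcnd
            rw [hr, if_neg hcnd] at hrpos
            exact absurd hrpos (lt_irrefl 0)
          have hb1' : b = 1 := hcnd.resolve_left hd2
          have : r = 1 := by rw [hr, if_pos hcnd, hb1']
          rw [this, frUtil_one']
          exact hv1s
      · rw [hra, Finset.sum_union (hdSZ1.mono_left hP_S),
          Finset.sum_union (hdSZ2.mono_left hQ_S), hZ1z]
        linarith
      · left
        rw [hfr0, hfr0, Finset.sum_union (hdSZ1.mono_left hP_S),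
          Finset.sum_union (hdSZ2.mono_left hQ_S), hZ2z]
        have hmul : r * I.v 0 s ≤ b * I.v 0 s :=
          mul_le_mul_of_nonneg_right hrleb (le_of_lt hv0s)
        linarith [heq, hmul, hZ1nn]
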